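/- Let q be a prime power and let a, b be positive integers with gcd(a,b) = 1. Let H_Y(d) = dim_{F_q} S_d − dim_{F_q} I_d be the Hilbert function of the set Y of F_q-rational points of P(1,a,b). Then the following identity of formal power series in t (with integer coefficients) holds: (1−t)(1−t^a)(1−t^b) · Σ_{d=0}^{∞} H_Y(d) t^d = 1 − t^{qa+1} − t^{qb+1} − t^{(q−1)ab+a+b} + t^{qa+qb+1} + t^{(q−1)ab+a+b+1}. -/

import Mathlib

/-!
On a field with `q` elements, `x ^ m` depends only on whether `m = 0` and, if not, on `m` modulo
`q - 1`. Evaluation on `F³ ∖ {0}` therefore maps `S_d` onto the span of the monomial functions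
`x ^ e`, where `e ∈ {0, …, q - 1}³` runs over the reductions of the exponents of degree-`d`
monomials. These functions are linearly independent: a polynomial of degree `< q` in each variable
that vanishes on all of `F³` is zero, and for `d > 0` the reduction `e = 0` does not occur. So
`H_Y(d)` counts reduced exponents. Summing over `e` instead of `d`, a reduced `e` occurs exactly in
the degrees `deg e + (q - 1) • M`, where `M` is the monoid generated by those of `1, a, b` whose
coordinate in `e` is positive. As `gcd(a, b) = 1`, the generating function of `aℕ + bℕ` is
`(1 - t^{ab}) / ((1 - t^a)(1 - t^b))`, and the resulting rational functions add up to the claim.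
-/

open MvPolynomial

noncomputable section

variable (F : Type) [Field F] [Fintype F]

/-- The submodule of polynomials vanishing at every nonzero point of `F³`. -/
def vanishing : Submodule F (MvPolynomial (Fin 3) F) where
  carrier := {f | ∀ y : Fin 3 → F, y ≠ 0 → eval y f = 0}
  add_mem' := fun hf hg y hy => by simp [hf y hy, hg y hy]
  zero_mem' := fun y hy => by simp
  smul_mem' := fun c f hf y hy => by simp [MvPolynomial.smul_eval, hf y hy]

/-- `S_d`: the degree-`d` weighted-homogeneous piece (weights `1, a, b`). -/
def Sd (a b d : ℕ) : Submodule F (MvPolynomial (Fin 3) F) :=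
  weightedHomogeneousSubmodule F ![1, a, b] d

/-- `I_d`: the degree-`d` piece of the vanishing ideal of `ℙ(1,a,b)(F_q)`. -/
def Id' (a b d : ℕ) : Submodule F (MvPolynomial (Fin 3) F) := Sd F a b d ⊓ vanishing F

/-- The Hilbert function `H_Y(d) = dim S_d − dim I_d` of `Y = ℙ(1,a,b)(F_q)`. -/
def HY (a b d : ℕ) : ℕ :=
  Module.finrank F ↥(Sd F a b d) - Module.finrank F ↥(Id' F a b d)

/-- Used with `c = q - 1`. Unlike `m % (q - 1)`, it keeps positive exponents positive, which
matters at `x = 0`. -/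
def reduceExp (c : ℕ) : ℕ → ℕ
  | 0 => 0
  | m + 1 => m % c + 1

@[simp]
lemma reduceExp_zero (c : ℕ) : reduceExp c 0 = 0 := rfl

lemma reduceExp_eq_zero_iff {c m : ℕ} : reduceExp c m = 0 ↔ m = 0 := by
  cases m <;> simp [reduceExp]

lemma reduceExp_le {c : ℕ} (hc : 0 < c) (m : ℕ) : reduceExp c m ≤ c := by
  cases m with
  | zero => exact Nat.zero_le c
  | succ n => exact Nat.mod_lt n hc

lemma reduceExp_eq_iff {c r m : ℕ} (hr : r ≤ c) :
    reduceExp c m = r ↔ ∃ n, m = r + c * n ∧ (r = 0 → n = 0) := by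
  rcases Nat.eq_zero_or_pos r with rfl | hr0
  · simp [reduceExp_eq_zero_iff]
  cases m with
  | zero =>
    refine ⟨fun h => absurd h.symm hr0.ne', ?_⟩
    rintro ⟨n, hn, -⟩
    omega
  | succ m =>
    have : m % c = r - 1 ↔ ∃ n, m = r - 1 + c * n := by
      constructor
      · intro h; exact ⟨m / c, by rw [← h, Nat.mod_add_div]⟩
      · rintro ⟨n, rfl⟩; rw [Nat.add_mul_mod_self_left, Nat.mod_eq_of_lt (by omega)]
    simp only [reduceExp, hr0.ne', false_imp_iff, and_true]
    constructor
    · intro h; obtain ⟨n, hn⟩ := this.mp (by omega); exact ⟨n, by omega⟩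
    · rintro ⟨n, hn⟩; have := this.mpr ⟨n, by omega⟩; omega

def reduceExps {σ : Type*} (c : ℕ) (m : σ →₀ ℕ) : σ →₀ ℕ :=
  m.mapRange (reduceExp c) (reduceExp_zero c)

@[simp]
lemma reduceExps_zero {σ : Type*} (c : ℕ) : reduceExps c (0 : σ →₀ ℕ) = 0 :=
  Finsupp.mapRange_zero

lemma FiniteField.pow_reduceExp {K : Type*} [Field K] [Fintype K] (x : K) (m : ℕ) :
    x ^ reduceExp (Fintype.card K - 1) m = x ^ m := by
  have hc : 0 < Fintype.card K - 1 := Nat.sub_pos_of_lt Fintype.one_lt_card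
  by_cases hx : x = 0
  · rcases eq_or_ne m 0 with rfl | hm
    · rfl
    · rw [hx, zero_pow hm, zero_pow (reduceExp_eq_zero_iff.not.mpr hm)]
  · obtain ⟨n, hn, -⟩ := (reduceExp_eq_iff (reduceExp_le hc m)).mp rfl
    conv_rhs => rw [hn, pow_add, pow_mul, pow_card_sub_one_eq_one x hx, one_pow, mul_one]

open Module in
lemma finrank_sub_finrank_inf_ker {K V W : Type*} [Field K] [AddCommGroup V] [Module K V]
    [AddCommGroup W] [Module K W] (S : Submodule K V) [FiniteDimensional K S] (f : V →ₗ[K] W) :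
    finrank K S - finrank K ↥(S ⊓ LinearMap.ker f) = finrank K (S.map f) := by
  rw [← LinearMap.range_domRestrict, ← (Submodule.comapSubtypeEquivOfLe inf_le_left).finrank_eq,
    Submodule.comap_inf, Submodule.comap_subtype_self, top_inf_eq, ← LinearMap.ker_domRestrict,
    ← LinearMap.finrank_range_add_finrank_ker (f.domRestrict S), Nat.add_sub_cancel]

universe u

section EvalOn

open Module

variable {σ K : Type u} [Field K]

def evalOn (s : Set (σ → K)) : MvPolynomial σ K →ₗ[K] (s → K) :=
  LinearMap.pi fun y => (aeval (y : σ → K)).toLinearMap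

@[simp]
lemma evalOn_apply (s : Set (σ → K)) (p : MvPolynomial σ K) (y : s) :
    evalOn s p y = eval (y : σ → K) p := by
  simp [evalOn]

lemma weightedHomogeneousSubmodule_eq_span_monomial {M : Type*} [AddCommMonoid M] (w : σ → M)
    (m : M) : weightedHomogeneousSubmodule K w m =
      Submodule.span K ((fun d => monomial d (1 : K)) '' {d | Finsupp.weight w d = m}) := by
  rw [weightedHomogeneousSubmodule_eq_finsupp_supported]
  exact restrictSupport_eq_span (R := K) _

lemma finiteDimensional_weightedHomogeneousSubmodule [Finite σ] {w : σ → ℕ} (hw : ∀ i, w i ≠ 0)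
    (m : ℕ) : FiniteDimensional K (weightedHomogeneousSubmodule K w m) :=
  Module.Finite.iff_fg.mpr (weightedHomogeneousSubmodule_fg (R := K) w hw m)

variable [Fintype K]

lemma eval_monomial_reduceExps (x : σ → K) (m : σ →₀ ℕ) :
    eval x (monomial (reduceExps (Fintype.card K - 1) m) 1) = eval x (monomial m 1) := by
  simp only [eval_monomial, one_mul, reduceExps]
  rw [Finsupp.prod_mapRange_index (fun i => pow_zero (x i))]
  exact Finsupp.prod_congr fun i _ => FiniteField.pow_reduceExp (x i) (m i)

lemma map_evalOn_weightedHomogeneousSubmodule {M : Type*} [AddCommMonoid M] (s : Set (σ → K))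
    (w : σ → M) (d : M) :
    (weightedHomogeneousSubmodule K w d).map (evalOn s) =
      Submodule.span K ((fun t => evalOn s (monomial t 1)) ''
        (reduceExps (Fintype.card K - 1) '' {m | Finsupp.weight w m = d})) := by
  rw [weightedHomogeneousSubmodule_eq_span_monomial, Submodule.map_span, Set.image_image,
    Set.image_image]
  congr 2
  ext m y
  simp [eval_monomial_reduceExps]

lemma linearIndepOn_evalOn_monomial [Finite σ] :
    LinearIndepOn K (fun t => evalOn {y : σ → K | y ≠ 0} (monomial t 1))
      {t | t ≠ 0 ∧ ∀ i, t i ≤ Fintype.card K - 1} := by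
  classical
  set s := {t : σ →₀ ℕ | t ≠ 0 ∧ ∀ i, t i ≤ Fintype.card K - 1}
  have hmono : LinearIndepOn K (fun t => monomial t (1 : K)) s := by
    simpa using (basisMonomials σ K).linearIndependent.linearIndepOn s
  refine LinearIndependent.map (f := evalOn {y : σ → K | y ≠ 0}) hmono ?_
  rw [Submodule.disjoint_def]
  intro p hp hker
  have hle : Submodule.span K (Set.range fun t : s => monomial (t : σ →₀ ℕ) (1 : K)) ≤
      restrictDegree σ K (Fintype.card K - 1) ⊓ LinearMap.ker (aeval (0 : σ → K)).toLinearMap := by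
    rw [Submodule.span_le]
    rintro _ ⟨⟨t, ht0, hts⟩, rfl⟩
    refine ⟨?_, ?_⟩
    · rw [SetLike.mem_coe, mem_restrictDegree, support_monomial, if_neg one_ne_zero]
      rintro _ h
      rw [Finset.mem_singleton.mp h]
      exact hts
    · simp [constantCoeff_monomial, ht0]
  obtain ⟨hdeg, hzero⟩ := hle hp
  refine eq_zero_of_eval_eq_zero σ K p (fun y => ?_) hdeg
  rcases eq_or_ne y 0 with rfl | hy
  · simpa using hzero
  · exact congrFun (LinearMap.mem_ker.mp hker) ⟨y, hy⟩

lemma finrank_map_evalOn_weightedHomogeneousSubmodule [Finite σ] [Nonempty σ] {w : σ → ℕ}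
    (hw : ∀ i, w i ≠ 0) (d : ℕ) :
    finrank K ((weightedHomogeneousSubmodule K w d).map (evalOn {y : σ → K | y ≠ 0})) =
      (reduceExps (Fintype.card K - 1) '' {m | Finsupp.weight w m = d}).ncard := by
  have hc : 0 < Fintype.card K - 1 := Nat.sub_pos_of_lt Fintype.one_lt_card
  rw [map_evalOn_weightedHomogeneousSubmodule]
  -- On `{y ≠ 0}` the constant `1` is a combination of the other reduced monomials
  -- (`1 = 1 - ∏ i, (1 - y i ^ (q - 1))`), so degree `0` is treated apart.
  rcases Nat.eq_zero_or_pos d with rfl | hd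
  · have hzero : {m : σ →₀ ℕ | Finsupp.weight w m = 0} = {0} := by
      ext m
      have := Finsupp.nonTorsionWeight_of ℕ w hw
      exact Finsupp.weight_eq_zero_iff_eq_zero w
    have hone : evalOn {y : σ → K | y ≠ 0} (monomial 0 1) ≠ 0 := by
      intro h
      have h1 := congrFun h ⟨1, one_ne_zero⟩
      rw [evalOn_apply, eval_monomial, Finsupp.prod_zero_index, mul_one] at h1
      exact one_ne_zero h1
    rw [hzero, Set.image_singleton, reduceExps_zero, Set.image_singleton, Set.ncard_singleton]
    exact finrank_span_singleton hone
  · rw [finrank, ← Cardinal.toNat_toENat, toENat_rank_span_set, Set.ncard_def]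
    refine linearIndepOn_evalOn_monomial.mono ?_
    rintro _ ⟨m, hm, rfl⟩
    refine ⟨fun h => ?_, fun i => reduceExp_le hc (m i)⟩
    have hm0 : m = 0 := Finsupp.ext fun i => reduceExp_eq_zero_iff.mp (DFunLike.congr_fun h i)
    rw [Set.mem_ofPred_eq, hm0, map_zero] at hm
    exact hd.ne hm

end EvalOn

section ExponentTriples

def weightedDeg (a b : ℕ) (m : ℕ × ℕ × ℕ) : ℕ := m.1 + a * m.2.1 + b * m.2.2

def reduceTriple (c : ℕ) (m : ℕ × ℕ × ℕ) : ℕ × ℕ × ℕ :=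
  (reduceExp c m.1, reduceExp c m.2.1, reduceExp c m.2.2)

def degreeSet (c a b : ℕ) (t : ℕ × ℕ × ℕ) : Set ℕ := weightedDeg a b '' (reduceTriple c ⁻¹' {t})

def reducedBox (c : ℕ) : Finset (ℕ × ℕ × ℕ) :=
  Finset.range (c + 1) ×ˢ Finset.range (c + 1) ×ˢ Finset.range (c + 1)

variable {a b c : ℕ}

lemma mem_reducedBox {t : ℕ × ℕ × ℕ} : t ∈ reducedBox c ↔ t.1 ≤ c ∧ t.2.1 ≤ c ∧ t.2.2 ≤ c := by
  simp only [reducedBox, Finset.mem_product, Finset.mem_range, Nat.lt_succ_iff]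

lemma image_reduceTriple_preimage_weightedDeg (hc : 0 < c) (d : ℕ) :
    reduceTriple c '' (weightedDeg a b ⁻¹' {d}) =
      ↑(reducedBox c) ∩ {t | d ∈ degreeSet c a b t} := by
  ext t
  simp only [Set.mem_image, Set.mem_preimage, Set.mem_singleton_iff, Set.mem_inter_iff,
    Finset.mem_coe, Set.mem_ofPred_eq, degreeSet]
  constructor
  · rintro ⟨m, hm, rfl⟩
    exact ⟨mem_reducedBox.mpr ⟨reduceExp_le hc _, reduceExp_le hc _, reduceExp_le hc _⟩, m, rfl, hm⟩
  · rintro ⟨-, m, hm, hd⟩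
    exact ⟨m, hd, hm⟩

lemma degreeSet_eq {t : ℕ × ℕ × ℕ} (ht : t ∈ reducedBox c) :
    degreeSet c a b t = (weightedDeg a b t + ·) '' ((fun n => c * weightedDeg a b n) ''
      {n | (t.1 = 0 → n.1 = 0) ∧ (t.2.1 = 0 → n.2.1 = 0) ∧ (t.2.2 = 0 → n.2.2 = 0)}) := by
  obtain ⟨t₁, t₂, t₃⟩ := t
  obtain ⟨h₁, h₂, h₃⟩ := mem_reducedBox.mp ht
  ext d
  simp only [degreeSet, Set.image_image, Set.mem_image, Set.mem_preimage, Set.mem_singleton_iff,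
    reduceTriple, Prod.mk.injEq, reduceExp_eq_iff h₁, reduceExp_eq_iff h₂, reduceExp_eq_iff h₃,
    Set.mem_ofPred_eq, Prod.exists]
  constructor
  · rintro ⟨m₁, m₂, m₃, ⟨⟨n₁, rfl, hn₁⟩, ⟨n₂, rfl, hn₂⟩, ⟨n₃, rfl, hn₃⟩⟩, rfl⟩
    exact ⟨n₁, n₂, n₃, ⟨hn₁, hn₂, hn₃⟩, by simp only [weightedDeg]; ring⟩
  · rintro ⟨n₁, n₂, n₃, ⟨hn₁, hn₂, hn₃⟩, rfl⟩
    refine ⟨_, _, _, ⟨⟨n₁, rfl, hn₁⟩, ⟨n₂, rfl, hn₂⟩, ⟨n₃, rfl, hn₃⟩⟩, ?_⟩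
    simp only [weightedDeg]
    ring

lemma degreeSet_zero : degreeSet c a b (0, 0, 0) = {0} := by
  rw [degreeSet_eq (mem_reducedBox.mpr ⟨c.zero_le, c.zero_le, c.zero_le⟩)]
  ext d
  simp [weightedDeg, eq_comm]

lemma degreeSet_succ_fst {i j k : ℕ} (hi : i + 1 ≤ c) (hj : j ≤ c) (hk : k ≤ c) :
    degreeSet c a b (i + 1, j, k) = (i + 1 + a * j + b * k + ·) '' Set.range (c * ·) := by
  rw [degreeSet_eq (mem_reducedBox.mpr ⟨hi, hj, hk⟩)]
  congr 1
  ext x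
  simp only [Set.mem_image, Set.mem_range, Set.mem_ofPred_eq]
  constructor
  · rintro ⟨n, -, rfl⟩
    exact ⟨_, rfl⟩
  · rintro ⟨n, rfl⟩
    exact ⟨(n, 0, 0), by simp, by simp [weightedDeg]⟩

lemma degreeSet_zero_succ_zero {j : ℕ} (hj : j + 1 ≤ c) :
    degreeSet c a b (0, j + 1, 0) = (a * (j + 1) + ·) '' Set.range (c * a * ·) := by
  rw [degreeSet_eq (mem_reducedBox.mpr ⟨c.zero_le, hj, c.zero_le⟩)]
  congr 1
  · simp [weightedDeg]
  ext x
  simp only [Set.mem_image, Set.mem_range, Set.mem_ofPred_eq]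
  constructor
  · rintro ⟨⟨n₁, n₂, n₃⟩, ⟨hn₁, -, hn₃⟩, rfl⟩
    obtain ⟨rfl, rfl⟩ : n₁ = 0 ∧ n₃ = 0 := ⟨hn₁ trivial, hn₃ trivial⟩
    exact ⟨n₂, by simp [weightedDeg, mul_assoc]⟩
  · rintro ⟨n, rfl⟩
    exact ⟨(0, n, 0), by simp, by simp [weightedDeg, mul_assoc]⟩

lemma degreeSet_zero_zero_succ {k : ℕ} (hk : k + 1 ≤ c) :
    degreeSet c a b (0, 0, k + 1) = (b * (k + 1) + ·) '' Set.range (c * b * ·) := by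
  rw [degreeSet_eq (mem_reducedBox.mpr ⟨c.zero_le, c.zero_le, hk⟩)]
  congr 1
  · simp [weightedDeg]
  ext x
  simp only [Set.mem_image, Set.mem_range, Set.mem_ofPred_eq]
  constructor
  · rintro ⟨⟨n₁, n₂, n₃⟩, ⟨hn₁, hn₂, -⟩, rfl⟩
    obtain ⟨rfl, rfl⟩ : n₁ = 0 ∧ n₂ = 0 := ⟨hn₁ trivial, hn₂ trivial⟩
    exact ⟨n₃, by simp [weightedDeg, mul_assoc]⟩
  · rintro ⟨n, rfl⟩
    exact ⟨(0, 0, n), by simp, by simp [weightedDeg, mul_assoc]⟩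

lemma degreeSet_zero_succ_succ {j k : ℕ} (hj : j + 1 ≤ c) (hk : k + 1 ≤ c) :
    degreeSet c a b (0, j + 1, k + 1) =
      (a * (j + 1) + b * (k + 1) + ·) ''
        Set.range (fun n : ℕ × ℕ => c * a * n.1 + c * b * n.2) := by
  rw [degreeSet_eq (mem_reducedBox.mpr ⟨c.zero_le, hj, hk⟩)]
  congr 1
  · simp [weightedDeg]
  ext x
  simp only [Set.mem_image, Set.mem_range, Set.mem_ofPred_eq, Prod.exists]
  constructor
  · rintro ⟨n₁, n₂, n₃, ⟨hn₁, -, -⟩, rfl⟩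
    obtain rfl : n₁ = 0 := hn₁ trivial
    exact ⟨n₂, n₃, by simp only [weightedDeg]; ring⟩
  · rintro ⟨n₂, n₃, rfl⟩
    exact ⟨0, n₂, n₃, by simp, by simp only [weightedDeg]; ring⟩

end ExponentTriples

def finsuppFinThreeEquiv : (Fin 3 →₀ ℕ) ≃ ℕ × ℕ × ℕ where
  toFun m := (m 0, m 1, m 2)
  invFun t := Finsupp.equivFunOnFinite.symm ![t.1, t.2.1, t.2.2]
  left_inv m := by ext i; fin_cases i <;> rfl
  right_inv t := rfl

lemma weight_eq_weightedDeg (a b : ℕ) (m : Fin 3 →₀ ℕ) :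
    Finsupp.weight ![1, a, b] m = weightedDeg a b (finsuppFinThreeEquiv m) := by
  change _ = m 0 + a * m 1 + b * m 2
  simp [Finsupp.weight_eq_sum, Fin.sum_univ_three, mul_comm]

lemma ncard_image_reduceExps_eq (a b c d : ℕ) :
    (reduceExps c '' {m : Fin 3 →₀ ℕ | Finsupp.weight ![1, a, b] m = d}).ncard =
      (reduceTriple c '' (weightedDeg a b ⁻¹' {d})).ncard := by
  rw [← Set.ncard_image_of_injective _ finsuppFinThreeEquiv.injective, Set.image_image,
    show (fun m => finsuppFinThreeEquiv (reduceExps c m)) = reduceTriple c ∘ finsuppFinThreeEquiv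
      from rfl, Set.image_comp, finsuppFinThreeEquiv.image_eq_preimage_symm]
  congr 2
  ext t
  simp [weight_eq_weightedDeg]

section NatSetSeries

open Finset

local notation "𝐭" => (PowerSeries.X : PowerSeries ℤ)

def natSetSeries (s : Set ℕ) : PowerSeries ℤ := PowerSeries.mk (s.indicator 1)

lemma coeff_natSetSeries (s : Set ℕ) (d : ℕ) :
    PowerSeries.coeff d (natSetSeries s) = s.indicator 1 d :=
  PowerSeries.coeff_mk _ _

lemma natSetSeries_singleton_zero : natSetSeries {0} = 1 := by
  ext d
  rw [coeff_natSetSeries, PowerSeries.coeff_one, Set.indicator_apply]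
  simp

lemma natSetSeries_union {s s' : Set ℕ} (h : Disjoint s s') :
    natSetSeries (s ∪ s') = natSetSeries s + natSetSeries s' := by
  ext d
  simp only [coeff_natSetSeries, map_add, Set.indicator_union_of_disjoint h]

lemma natSetSeries_biUnion {ι : Type*} (I : Finset ι) (s : ι → Set ℕ)
    (h : (I : Set ι).PairwiseDisjoint s) :
    natSetSeries (⋃ i ∈ I, s i) = ∑ i ∈ I, natSetSeries (s i) := by
  ext d
  simp only [coeff_natSetSeries, map_sum, Finset.indicator_biUnion I s h]

lemma natSetSeries_image_add (n : ℕ) (s : Set ℕ) :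
    natSetSeries ((n + ·) '' s) = 𝐭 ^ n * natSetSeries s := by
  ext d
  rw [coeff_natSetSeries, mul_comm, PowerSeries.coeff_mul_X_pow', coeff_natSetSeries]
  by_cases hnd : n ≤ d
  · obtain ⟨e, rfl⟩ := Nat.exists_eq_add_of_le hnd
    rw [if_pos hnd, Nat.add_sub_cancel_left, Set.indicator_image (add_right_injective n)]
    rfl
  · have : d ∉ (n + ·) '' s := by rintro ⟨e, -, rfl⟩; exact hnd (Nat.le_add_right n e)
    rw [if_neg hnd, Set.indicator_of_notMem this]

lemma sum_natSetSeries {ι : Type*} (T : Finset ι) (D : ι → Set ℕ) :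
    ∑ t ∈ T, natSetSeries (D t) = PowerSeries.mk fun d => ((↑T ∩ {t | d ∈ D t}).ncard : ℤ) := by
  classical
  ext d
  simp only [map_sum, coeff_natSetSeries, PowerSeries.coeff_mk, Set.indicator_apply, Pi.one_apply]
  rw [Finset.sum_boole, ← Set.ncard_coe_finset]
  congr 3
  ext t
  simp

lemma one_sub_X_pow_mul_natSetSeries_range_mul {k : ℕ} (hk : 0 < k) :
    (1 - 𝐭 ^ k) * natSetSeries (Set.range (k * ·)) = 1 := by
  have hsplit : Set.range (k * ·) = {0} ∪ (k + ·) '' Set.range (k * ·) := by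
    ext d
    simp only [Set.mem_range, Set.mem_union, Set.mem_singleton_iff, Set.mem_image,
      exists_exists_eq_and]
    constructor
    · rintro ⟨_ | n, rfl⟩
      · exact .inl (mul_zero k)
      · exact .inr ⟨n, by ring⟩
    · rintro (rfl | ⟨n, rfl⟩)
      · exact ⟨0, mul_zero k⟩
      · exact ⟨n + 1, by ring⟩
  have hdisj : Disjoint {0} ((k + ·) '' Set.range (k * ·)) := by
    rw [Set.disjoint_singleton_left]
    rintro ⟨_, -, h⟩
    exact hk.ne' (Nat.eq_zero_of_add_eq_zero_right h)
  have h := congrArg natSetSeries hsplit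
  rw [natSetSeries_union hdisj, natSetSeries_singleton_zero, natSetSeries_image_add] at h
  linear_combination h

variable {a b c : ℕ}

lemma one_sub_X_pow_mul_one_sub_X_pow_mul_natSetSeries_range (ha : 0 < a)
    (hc : 0 < c) (hab : Nat.Coprime a b) :
    (1 - 𝐭 ^ (c * a)) * (1 - 𝐭 ^ (c * b)) *
        natSetSeries (Set.range fun n : ℕ × ℕ => c * a * n.1 + c * b * n.2) =
      1 - 𝐭 ^ (c * a * b) := by
  have hsplit : (Set.range fun n : ℕ × ℕ => c * a * n.1 + c * b * n.2) =
      ⋃ j ∈ Finset.range a, (c * b * j + ·) '' Set.range (c * a * ·) := by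
    ext d
    simp only [Set.mem_range, Set.mem_iUnion, Finset.mem_range, Set.mem_image, Prod.exists,
      exists_prop, exists_exists_eq_and]
    constructor
    · rintro ⟨u, v, rfl⟩
      refine ⟨v % a, Nat.mod_lt v ha, u + b * (v / a), ?_⟩
      conv_rhs => rw [← Nat.mod_add_div v a]
      ring
    · rintro ⟨j, -, u, rfl⟩
      exact ⟨u, j, add_comm _ _⟩
  have hdisj : ((Finset.range a : Finset ℕ) : Set ℕ).PairwiseDisjoint
      fun j => (c * b * j + ·) '' Set.range (c * a * ·) := by
    intro j hj j' hj' hne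
    refine Set.disjoint_left.mpr ?_
    rintro _ ⟨_, ⟨u, rfl⟩, rfl⟩ ⟨_, ⟨u', rfl⟩, h⟩
    have h' : b * j' + a * u' = b * j + a * u :=
      Nat.eq_of_mul_eq_mul_left hc (by linear_combination h)
    have hmod : b * j' ≡ b * j [MOD a] := by
      simpa only [Nat.ModEq, Nat.add_mul_mod_self_left] using congrArg (· % a) h'
    exact hne ((Nat.ModEq.cancel_left_of_coprime hab hmod).eq_of_lt_of_lt
      (Finset.mem_range.mp hj') (Finset.mem_range.mp hj)).symm
  rw [hsplit, natSetSeries_biUnion _ _ hdisj]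
  simp only [natSetSeries_image_add, ← Finset.sum_mul, pow_mul 𝐭 (c * b)]
  calc (1 - 𝐭 ^ (c * a)) * (1 - 𝐭 ^ (c * b)) * ((∑ j ∈ Finset.range a, (𝐭 ^ (c * b)) ^ j) *
        natSetSeries (Set.range (c * a * ·)))
      = ((1 - 𝐭 ^ (c * b)) * ∑ j ∈ Finset.range a, (𝐭 ^ (c * b)) ^ j) *
          ((1 - 𝐭 ^ (c * a)) * natSetSeries (Set.range (c * a * ·))) := by ring
    _ = 1 - 𝐭 ^ (c * a * b) := by
      rw [mul_neg_geom_sum, one_sub_X_pow_mul_natSetSeries_range_mul (by positivity), mul_one,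
        ← pow_mul, mul_right_comm]

lemma sum_natSetSeries_degreeSet :
    ∑ t ∈ reducedBox c, natSetSeries (degreeSet c a b t) =
      1 + 𝐭 ^ b * (∑ k ∈ range c, (𝐭 ^ b) ^ k) * natSetSeries (Set.range (c * b * ·))
        + 𝐭 ^ a * (∑ j ∈ range c, (𝐭 ^ a) ^ j) * natSetSeries (Set.range (c * a * ·))
        + 𝐭 ^ a * (∑ j ∈ range c, (𝐭 ^ a) ^ j) * (𝐭 ^ b * ∑ k ∈ range c, (𝐭 ^ b) ^ k) *
            natSetSeries (Set.range fun n : ℕ × ℕ => c * a * n.1 + c * b * n.2)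
        + 𝐭 * (∑ i ∈ range c, 𝐭 ^ i) * (∑ j ∈ range (c + 1), (𝐭 ^ a) ^ j) *
            (∑ k ∈ range (c + 1), (𝐭 ^ b) ^ k) * natSetSeries (Set.range (c * ·)) := by
  have hfst : ∑ i ∈ range c, ∑ j ∈ range (c + 1), ∑ k ∈ range (c + 1),
      natSetSeries (degreeSet c a b (i + 1, j, k)) =
        (∑ i ∈ range c, 𝐭 ^ (i + 1)) * ((∑ j ∈ range (c + 1), (𝐭 ^ a) ^ j) *
            ((∑ k ∈ range (c + 1), (𝐭 ^ b) ^ k) * natSetSeries (Set.range (c * ·)))) := by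
    have hterm : ∀ i ∈ range c, ∀ j ∈ range (c + 1), ∀ k ∈ range (c + 1),
        natSetSeries (degreeSet c a b (i + 1, j, k)) =
          𝐭 ^ (i + 1) * ((𝐭 ^ a) ^ j * ((𝐭 ^ b) ^ k * natSetSeries (Set.range (c * ·)))) := by
      intro i hi j hj k hk
      simp only [Finset.mem_range] at hi hj hk
      rw [degreeSet_succ_fst (by omega) (by omega) (by omega), natSetSeries_image_add]
      ring
    rw [Finset.sum_congr rfl fun i hi => Finset.sum_congr rfl fun j hj =>
      Finset.sum_congr rfl fun k hk => hterm i hi j hj k hk]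
    simp only [← Finset.mul_sum, ← Finset.sum_mul]
  have hzero_zero : ∑ k ∈ range (c + 1), natSetSeries (degreeSet c a b (0, 0, k)) =
      1 + 𝐭 ^ b * (∑ k ∈ range c, (𝐭 ^ b) ^ k) * natSetSeries (Set.range (c * b * ·)) := by
    rw [Finset.sum_range_succ', degreeSet_zero, natSetSeries_singleton_zero, Finset.mul_sum,
      Finset.sum_mul, add_comm]
    refine congrArg _ (Finset.sum_congr rfl fun k hk => ?_)
    rw [degreeSet_zero_zero_succ (Finset.mem_range.mp hk), natSetSeries_image_add]
    ring
  have hzero_succ : ∀ j ∈ range c,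
      ∑ k ∈ range (c + 1), natSetSeries (degreeSet c a b (0, j + 1, k)) =
      𝐭 ^ a * (𝐭 ^ a) ^ j * natSetSeries (Set.range (c * a * ·)) + 𝐭 ^ a * (𝐭 ^ a) ^ j *
        (𝐭 ^ b * ∑ k ∈ range c, (𝐭 ^ b) ^ k) *
          natSetSeries (Set.range fun n : ℕ × ℕ => c * a * n.1 + c * b * n.2) := by
    intro j hj
    rw [Finset.sum_range_succ', degreeSet_zero_succ_zero (Finset.mem_range.mp hj),
      natSetSeries_image_add, add_comm, Finset.mul_sum, Finset.mul_sum, Finset.sum_mul]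
    congr 1
    · ring
    refine Finset.sum_congr rfl fun k hk => ?_
    rw [degreeSet_zero_succ_succ (Finset.mem_range.mp hj) (Finset.mem_range.mp hk),
      natSetSeries_image_add]
    ring
  simp only [reducedBox, Finset.sum_product]
  rw [Finset.sum_range_succ', hfst,
    Finset.sum_range_succ' fun j => ∑ k ∈ range (c + 1), natSetSeries (degreeSet c a b (0, j, k)),
    hzero_zero, Finset.sum_congr rfl hzero_succ]
  simp only [Finset.sum_add_distrib, pow_succ', ← Finset.sum_mul, ← Finset.mul_sum]
  ring

lemma mul_sum_natSetSeries_degreeSet (ha : 0 < a)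
    (hb : 0 < b) (hc : 0 < c) (hab : Nat.Coprime a b) :
    (1 - 𝐭) * (1 - 𝐭 ^ a) * (1 - 𝐭 ^ b) * ∑ t ∈ reducedBox c, natSetSeries (degreeSet c a b t) =
      1 - 𝐭 ^ ((c + 1) * a + 1) - 𝐭 ^ ((c + 1) * b + 1) - 𝐭 ^ (c * a * b + a + b)
        + 𝐭 ^ ((c + 1) * a + (c + 1) * b + 1) + 𝐭 ^ (c * a * b + a + b + 1) := by
  have hmul : ∀ {w : ℕ}, 0 < w → (1 - 𝐭 ^ w) *
      (𝐭 ^ w * (∑ j ∈ range c, (𝐭 ^ w) ^ j) * natSetSeries (Set.range (c * w * ·))) = 𝐭 ^ w := by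
    intro w hw
    linear_combination 𝐭 ^ w * natSetSeries (Set.range (c * w * ·)) * mul_neg_geom_sum (𝐭 ^ w) c
      + 𝐭 ^ w * one_sub_X_pow_mul_natSetSeries_range_mul (Nat.mul_pos hc hw)
  have hpair : (1 - 𝐭 ^ a) * (1 - 𝐭 ^ b) *
      (𝐭 ^ a * (∑ j ∈ range c, (𝐭 ^ a) ^ j) * (𝐭 ^ b * ∑ k ∈ range c, (𝐭 ^ b) ^ k) *
        natSetSeries (Set.range fun n : ℕ × ℕ => c * a * n.1 + c * b * n.2)) =
      𝐭 ^ a * 𝐭 ^ b * (1 - 𝐭 ^ (c * a * b)) := by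
    set M := natSetSeries (Set.range fun n : ℕ × ℕ => c * a * n.1 + c * b * n.2)
    set B := ∑ k ∈ range c, (𝐭 ^ b) ^ k
    linear_combination 𝐭 ^ a * 𝐭 ^ b * (1 - 𝐭 ^ b) * B * M * mul_neg_geom_sum (𝐭 ^ a) c
      + 𝐭 ^ a * 𝐭 ^ b * (1 - 𝐭 ^ (c * a)) * M * mul_neg_geom_sum (𝐭 ^ b) c
      + 𝐭 ^ a * 𝐭 ^ b * one_sub_X_pow_mul_one_sub_X_pow_mul_natSetSeries_range ha hc hab
  have hfst : (1 - 𝐭) * (1 - 𝐭 ^ a) * (1 - 𝐭 ^ b) *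
      (𝐭 * (∑ i ∈ range c, 𝐭 ^ i) * (∑ j ∈ range (c + 1), (𝐭 ^ a) ^ j) *
        (∑ k ∈ range (c + 1), (𝐭 ^ b) ^ k) * natSetSeries (Set.range (c * ·))) =
      𝐭 * (1 - (𝐭 ^ a) ^ (c + 1)) * (1 - (𝐭 ^ b) ^ (c + 1)) := by
    set M := natSetSeries (Set.range (c * ·))
    set A := ∑ j ∈ range (c + 1), (𝐭 ^ a) ^ j
    set B := ∑ k ∈ range (c + 1), (𝐭 ^ b) ^ k
    linear_combination 𝐭 * (1 - 𝐭 ^ a) * A * (1 - 𝐭 ^ b) * B * M * mul_neg_geom_sum 𝐭 c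
      + 𝐭 * (1 - 𝐭 ^ c) * (1 - 𝐭 ^ b) * B * M * mul_neg_geom_sum (𝐭 ^ a) (c + 1)
      + 𝐭 * (1 - 𝐭 ^ c) * (1 - (𝐭 ^ a) ^ (c + 1)) * M * mul_neg_geom_sum (𝐭 ^ b) (c + 1)
      + 𝐭 * (1 - (𝐭 ^ a) ^ (c + 1)) * (1 - (𝐭 ^ b) ^ (c + 1)) *
        one_sub_X_pow_mul_natSetSeries_range_mul hc
  rw [sum_natSetSeries_degreeSet]
  linear_combination (1 - 𝐭) * (1 - 𝐭 ^ a) * hmul hb + (1 - 𝐭) * (1 - 𝐭 ^ b) * hmul ha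
    + (1 - 𝐭) * hpair + hfst

end NatSetSeries

lemma vanishing_eq_ker_evalOn (K : Type) [Field K] [Fintype K] :
    vanishing K = LinearMap.ker (evalOn {y : Fin 3 → K | y ≠ 0}) := by
  ext p
  simp [vanishing, funext_iff]

lemma HY_eq_ncard {a b : ℕ} (ha : 0 < a) (hb : 0 < b) (d : ℕ) :
    HY F a b d = (↑(reducedBox (Fintype.card F - 1)) ∩
      {t | d ∈ degreeSet (Fintype.card F - 1) a b t}).ncard := by
  have hw : ∀ i, ![1, a, b] i ≠ 0 := by
    intro i; fin_cases i <;> simp [ha.ne', hb.ne']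
  have := finiteDimensional_weightedHomogeneousSubmodule (K := F) hw d
  rw [HY, Id', vanishing_eq_ker_evalOn, Sd, finrank_sub_finrank_inf_ker,
    finrank_map_evalOn_weightedHomogeneousSubmodule hw, ncard_image_reduceExps_eq,
    image_reduceTriple_preimage_weightedDeg (Nat.sub_pos_of_lt Fintype.one_lt_card)]

/-- Theorem (Hilbert series of `ℙ(1,a,b)(F_q)`):
`(1−t)(1−t^a)(1−t^b)·Σ H_Y(d) t^d
  = 1 − t^{qa+1} − t^{qb+1} − t^{(q−1)ab+a+b} + t^{qa+qb+1} + t^{(q−1)ab+a+b+1}`. -/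
theorem hilbert_series_P1ab (q : ℕ) (hq : q = Fintype.card F) (a b : ℕ)
    (ha : 0 < a) (hb : 0 < b) (hab : Nat.gcd a b = 1) :
    (1 - PowerSeries.X) * (1 - PowerSeries.X ^ a) * (1 - PowerSeries.X ^ b) *
        PowerSeries.mk (fun d => (HY F a b d : ℤ)) =
      1 - PowerSeries.X ^ (q * a + 1) - PowerSeries.X ^ (q * b + 1)
        - PowerSeries.X ^ ((q - 1) * a * b + a + b)
        + PowerSeries.X ^ (q * a + q * b + 1)
        + PowerSeries.X ^ ((q - 1) * a * b + a + b + 1) := by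
  have hq1 : 1 < q := hq ▸ Fintype.one_lt_card
  obtain ⟨c, rfl⟩ : ∃ c, q = c + 1 := ⟨q - 1, by omega⟩
  have hcard : Fintype.card F - 1 = c := by omega
  have hseries : PowerSeries.mk (fun d => (HY F a b d : ℤ)) =
      ∑ t ∈ reducedBox c, natSetSeries (degreeSet c a b t) := by
    simp only [sum_natSetSeries, HY_eq_ncard F ha hb, hcard]
  rw [hseries, mul_sum_natSetSeries_degreeSet ha hb (by omega) hab, Nat.add_sub_cancel]

end
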